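/- arXiv:2208.00413 — 2 statements merged into one kernel-verified Lean document; each statement's English description precedes it below -/
import Mathlib

section
/- Let s > s₀ > d/2, r ≥ 1, and let σ₀, σ₁, …, σ_r ∈ {−1,+1}. Let X_{j,j₁,…,j_r} ∈ ℂ, indexed by (j,j₁,…,j_r) ∈ (ℤ^d)^{r+1}, be completely symmetric with respect to any permutation of the indexes j, j₁, …, j_r and satisfy M := sup_{j,j₁,…,j_r} |X_{j,j₁,…,j_r}| < ∞. For u^{(1)},…,u^{(r)} ∈ ℓ²_s(ℤ^d) define X_j(u^{(1)},…,u^{(r)}) := Σ X_{j,j₁,…,j_r} u^{(1)}_{j₁} ⋯ u^{(r)}_{j_r}, where the sum runs over all j₁,…,j_r ∈ ℤ^d with σ₀ j + Σ_{l=1}^r σ_l j_l = 0. Then there exists a constant C_{s,r} > 0 such that ‖X(u^{(1)},…,u^{(r)})‖_s ≤ C_{s,r} · M · Σ_{l=1}^r ‖u^{(1)}‖_{s₀} ⋯ ‖u^{(l−1)}‖_{s₀} ‖u^{(l)}‖_s ‖u^{(l+1)}‖_{s₀} ⋯ ‖u^{(r)}‖_{s₀}. -/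
open scoped BigOperators

namespace AG

abbrev Zd (d : ℕ) := Fin d → ℤ

noncomputable def enorm {d : ℕ} (j : Zd d) : ℝ := Real.sqrt (∑ i, ((j i : ℝ))^2)

/-- The norm of `ℓ²_s(ℤ^d)`. -/
noncomputable def zNorm (d : ℕ) (s : ℝ) (v : Zd d → ℂ) : ℝ :=
  Real.sqrt (∑' j : Zd d, (1 + enorm j) ^ (2 * s) * ‖v j‖ ^ 2)

/-- Membership in `ℓ²_s(ℤ^d)`. -/
def MemZ (d : ℕ) (s : ℝ) (v : Zd d → ℂ) : Prop :=
  Summable (fun j : Zd d => (1 + enorm j) ^ (2 * s) * ‖v j‖ ^ 2)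

/-- The `r`-linear map with coefficients `c` and momentum signs `σ`:
`X_j(u⁽¹⁾,…,u⁽ʳ⁾) = Σ_{σ₀ j + Σ σ_l j_l = 0} c_{j,j₁,…,j_r} u⁽¹⁾_{j₁} ⋯ u⁽ʳ⁾_{j_r}`. -/
noncomputable def Xfield (d r : ℕ) (σ : Fin (r + 1) → ℤ)
    (c : (Fin (r + 1) → Zd d) → ℂ) (u : Fin r → (Zd d → ℂ)) : Zd d → ℂ :=
  fun j => ∑' k : Fin r → Zd d,
    if σ 0 • j + ∑ l, σ l.succ • k l = (0 : Zd d)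
      then c (Fin.cons j k) * ∏ l, u l (k l) else 0

end AG

/-!
On the momentum hyperplane `σ₀ j + Σ σₗ jₗ = 0` the triangle inequality gives
`1 + |j| ≤ Σₗ (1 + |jₗ|)`, hence `(1 + |j|)^s ≤ r^s Σₗ (1 + |jₗ|)^s`: the weight of the output can
be moved onto one of the inputs. For each `l` what remains is a multilinear convolution of
`(1 + |·|)^s |u⁽ˡ⁾|` with the `|u⁽ᵐ⁾|`, `m ≠ l`, which Young's inequality `ℓ² ∗ ℓ¹ ∗ ⋯ ∗ ℓ¹ → ℓ²`
bounds by `‖u⁽ˡ⁾‖_s ∏_{m ≠ l} ‖u⁽ᵐ⁾‖_{ℓ¹}`. Finally Cauchy–Schwarz gives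
`‖v‖_{ℓ¹}² ≤ (Σ_j (1 + |j|)^{-2s₀}) ‖v‖_{s₀}²`, and this sum is finite because `2 s₀ > d`.

All sums are taken in `ℝ≥0∞`, so that summability only has to be checked at the very end.
-/

open scoped ENNReal
open Finset

theorem ENNReal.tsum_sq_le_tsum_mul_tsum_of_sq_le_mul {ι : Type*} {r f g : ι → ℝ≥0∞}
    (h : ∀ i, r i ^ 2 ≤ f i * g i) : (∑' i, r i) ^ 2 ≤ (∑' i, f i) * ∑' i, g i := by
  have sqrt_sq : ∀ x : ℝ≥0∞, (x ^ (2⁻¹ : ℝ)) ^ (2 : ℝ) = x := fun x => by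
    rw [← ENNReal.rpow_mul]; norm_num
  have hr : ∀ i, r i ≤ f i ^ (2⁻¹ : ℝ) * g i ^ (2⁻¹ : ℝ) := fun i => by
    rw [← ENNReal.mul_rpow_of_nonneg _ _ (by norm_num), ← ENNReal.rpow_le_rpow_iff two_pos,
      sqrt_sq, ENNReal.rpow_two]
    exact h i
  have holder : ∑' i, r i ≤ (∑' i, f i) ^ (2⁻¹ : ℝ) * (∑' i, g i) ^ (2⁻¹ : ℝ) := by
    rw [ENNReal.tsum_eq_iSup_sum]
    refine iSup_le fun t => ?_
    calc ∑ i ∈ t, r i ≤ ∑ i ∈ t, f i ^ (2⁻¹ : ℝ) * g i ^ (2⁻¹ : ℝ) := sum_le_sum fun i _ => hr i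
      _ ≤ (∑ i ∈ t, f i) ^ (2⁻¹ : ℝ) * (∑ i ∈ t, g i) ^ (2⁻¹ : ℝ) := by
        simpa [sqrt_sq] using ENNReal.inner_le_Lp_mul_Lq t (fun i => f i ^ (2⁻¹ : ℝ))
          (fun i => g i ^ (2⁻¹ : ℝ)) .two_two
      _ ≤ _ := by gcongr <;> exact ENNReal.sum_le_tsum t
  rw [← ENNReal.rpow_two, ← sqrt_sq ((∑' i, f i) * ∑' i, g i),
    ENNReal.mul_rpow_of_nonneg _ _ (by norm_num)]
  gcongr

theorem ENNReal.sq_sum_le_card_mul_sum_sq {ι : Type*} [Fintype ι] (f : ι → ℝ≥0∞) :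
    (∑ i, f i) ^ 2 ≤ Fintype.card ι * ∑ i, f i ^ 2 := by
  simpa [tsum_fintype] using
    ENNReal.tsum_sq_le_tsum_mul_tsum_of_sq_le_mul (f := fun _ => 1) (g := fun i => f i ^ 2)
      fun i => (one_mul _).ge

theorem ENNReal.rpow_le_card_rpow_mul_sum_rpow {ι : Type*} {t : Finset ι} (ht : t.Nonempty)
    {a : ℝ≥0∞} {b : ι → ℝ≥0∞} (h : a ≤ ∑ i ∈ t, b i) {p : ℝ} (hp : 0 ≤ p) :
    a ^ p ≤ (#t : ℝ≥0∞) ^ p * ∑ i ∈ t, b i ^ p := by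
  obtain ⟨i₀, hi₀, hmax⟩ := t.exists_max_image b ht
  calc a ^ p ≤ ((#t : ℝ≥0∞) * b i₀) ^ p := by
        gcongr
        calc a ≤ ∑ i ∈ t, b i := h
          _ ≤ ∑ _i ∈ t, b i₀ := sum_le_sum hmax
          _ = #t * b i₀ := by rw [sum_const, nsmul_eq_mul]
    _ = (#t : ℝ≥0∞) ^ p * b i₀ ^ p := ENNReal.mul_rpow_of_nonneg _ _ hp
    _ ≤ (#t : ℝ≥0∞) ^ p * ∑ i ∈ t, b i ^ p := by
        gcongr
        exact single_le_sum (f := fun i => b i ^ p) (fun _ _ => zero_le) hi₀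

theorem ENNReal.le_ofReal_toReal_add_one_sq {a : ℝ≥0∞} (ha : a ≠ ⊤) :
    a ≤ ENNReal.ofReal (a.toReal + 1) ^ 2 :=
  calc a = ENNReal.ofReal a.toReal := (ENNReal.ofReal_toReal ha).symm
    _ ≤ ENNReal.ofReal (a.toReal + 1) := ENNReal.ofReal_le_ofReal (by linarith)
    _ ≤ _ := le_self_pow₀ (ENNReal.one_le_ofReal.2 (by linarith [a.toReal_nonneg])) two_ne_zero

theorem ENNReal.tsum_pi_prod {α : Type*} :
    ∀ {n : ℕ} (f : Fin n → α → ℝ≥0∞), ∑' k : Fin n → α, ∏ i, f i (k i) = ∏ i, ∑' a, f i a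
  | 0, f => by simp
  | n + 1, f => by
    rw [← (Fin.consEquiv fun _ => α).tsum_eq, ENNReal.tsum_prod']
    simp [Fin.prod_univ_succ, ENNReal.tsum_mul_left, ENNReal.tsum_mul_right, ENNReal.tsum_pi_prod]

theorem ENNReal.tsum_pi_eq_tsum_tsum_removeNth {α : Type*} {n : ℕ} (l : Fin (n + 1))
    (F : α → (Fin n → α) → ℝ≥0∞) :
    ∑' k : Fin (n + 1) → α, F (k l) (l.removeNth k) = ∑' (a) (b), F a b := by
  rw [← (Fin.insertNthEquiv (fun _ => α) l).tsum_eq, ENNReal.tsum_prod']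
  simp [Fin.insertNthEquiv]

theorem ENNReal.ofReal_prod_ite_sq {n : ℕ} {x y : Fin (n + 1) → ℝ} (hx : ∀ m, 0 ≤ x m)
    (hy : ∀ m, 0 ≤ y m) (l : Fin (n + 1)) :
    ENNReal.ofReal (∏ m, if m = l then x m else y m) ^ 2 =
      ENNReal.ofReal (x l) ^ 2 * ∏ i, ENNReal.ofReal (y (l.succAbove i)) ^ 2 := by
  rw [ENNReal.ofReal_prod_of_nonneg fun m _ => by split_ifs; exacts [hx m, hy m],
    Fin.prod_univ_succAbove _ l, mul_pow, ← prod_pow]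
  simp [Fin.succAbove_ne]

-- `|n + 1/2|` does not vanish on `ℤ`, so `n = 0` needs no separate treatment.
theorem summable_one_add_abs_int_rpow_neg {p : ℝ} (hp : 1 < p) :
    Summable fun n : ℤ => (1 + |(n : ℝ)|) ^ (-p) := by
  refine ((Real.summable_one_div_int_add_rpow (1 / 2) p).2 hp).of_nonneg_of_le
    (fun n => by positivity) fun n => ?_
  have hpos : 0 < |(n : ℝ) + 1 / 2| := by
    refine abs_pos.2 fun h => ?_
    have : (2 * n + 1 : ℤ) = 0 := by exact_mod_cast (by linarith : (2 * n + 1 : ℝ) = 0)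
    omega
  rw [Real.rpow_neg (by positivity), one_div]
  gcongr
  calc |(n : ℝ) + 1 / 2| ≤ |(n : ℝ)| + |1 / 2| := abs_add_le _ _
    _ ≤ 1 + |(n : ℝ)| := by rw [abs_of_pos (by norm_num : (0 : ℝ) < 1 / 2)]; linarith

theorem norm_zsmul_of_sign {E : Type*} [SeminormedAddCommGroup E] {ε : ℤ} (hε : ε = 1 ∨ ε = -1)
    (x : E) : ‖ε • x‖ = ‖x‖ := by
  rcases hε with rfl | rfl <;> simp

section Momentum

variable {A : Type*} [AddCommGroup A]

theorem zsmul_add_eq_zero_iff_of_sign {ε : ℤ} (hε : ε = 1 ∨ ε = -1) {x y : A} :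
    ε • x + y = 0 ↔ x = ε • -y := by
  rcases hε with rfl | rfl <;> simp [add_eq_zero_iff_eq_neg]

theorem momentum_iff_eq_removeNth {n : ℕ} {σ : Fin (n + 2) → ℤ} (l : Fin (n + 1))
    (hσ : σ l.succ = 1 ∨ σ l.succ = -1) (j : A) (k : Fin (n + 1) → A) :
    σ 0 • j + ∑ m, σ m.succ • k m = 0 ↔
      k l = σ l.succ • -(σ 0 • j + ∑ i, σ (l.succAbove i).succ • l.removeNth k i) := by
  rw [Fin.sum_univ_succAbove _ l, add_left_comm, zsmul_add_eq_zero_iff_of_sign hσ]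
  rfl

variable [DecidableEq A]

noncomputable def signedConv {r : ℕ} (σ : Fin (r + 1) → ℤ) (f : Fin r → A → ℝ≥0∞) (j : A) :
    ℝ≥0∞ :=
  ∑' k : Fin r → A, if σ 0 • j + ∑ m, σ m.succ • k m = 0 then ∏ m, f m (k m) else 0

theorem tsum_ite_momentum_eq {r : ℕ} {σ : Fin (r + 1) → ℤ} (hσ : σ 0 = 1 ∨ σ 0 = -1)
    (k : Fin r → A) (c : ℝ≥0∞) :
    ∑' j : A, (if σ 0 • j + ∑ m, σ m.succ • k m = 0 then c else 0) = c := by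
  simp_rw [zsmul_add_eq_zero_iff_of_sign hσ]
  exact tsum_ite_eq _ _

/-- Young's inequality `ℓ² ∗ ℓ¹ ∗ ⋯ ∗ ℓ¹ → ℓ²`. For fixed `j`, Cauchy–Schwarz is applied on the
fibre of the hyperplane, which `σₗ = ±1` parametrises by the coordinates other than the `l`-th. -/
theorem tsum_signedConv_sq_le {n : ℕ} {σ : Fin (n + 2) → ℤ} (hσ : ∀ i, σ i = 1 ∨ σ i = -1)
    (f : Fin (n + 1) → A → ℝ≥0∞) (l : Fin (n + 1)) :
    ∑' j, signedConv σ f j ^ 2 ≤ (∑' a, f l a ^ 2) * (∏ i, ∑' a, f (l.succAbove i) a) ^ 2 := by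
  set L := ∏ i, ∑' a, f (l.succAbove i) a
  set P : (Fin n → A) → ℝ≥0∞ := fun b => ∏ i, f (l.succAbove i) (b i)
  set H : A → (Fin (n + 1) → A) → Prop := fun j k => σ 0 • j + ∑ m, σ m.succ • k m = 0
  have hP : ∑' b, P b = L := ENNReal.tsum_pi_prod _
  have hprod : ∀ k : Fin (n + 1) → A, ∏ m, f m (k m) = f l (k l) * P (l.removeNth k) :=
    fun k => Fin.prod_univ_succAbove _ l
  have hfiber : ∀ j, ∑' k, (if H j k then P (l.removeNth k) else 0) = L := by
    intro j
    simp_rw [H, momentum_iff_eq_removeNth l (hσ l.succ)]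
    rw [ENNReal.tsum_pi_eq_tsum_tsum_removeNth l
      (fun a b => if a = σ l.succ • -(σ 0 • j + ∑ i, σ (l.succAbove i).succ • b i) then P b else 0),
      ENNReal.tsum_comm]
    simp_rw [tsum_ite_eq]
    exact hP
  have hCS : ∀ j, signedConv σ f j ^ 2 ≤
      (∑' k, if H j k then f l (k l) ^ 2 * P (l.removeNth k) else 0) * L := by
    intro j
    rw [← hfiber j, signedConv]
    refine ENNReal.tsum_sq_le_tsum_mul_tsum_of_sq_le_mul fun k => ?_
    rw [hprod]
    split_ifs <;> simp [sq, mul_assoc, mul_left_comm]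
  calc ∑' j, signedConv σ f j ^ 2
      ≤ ∑' j, (∑' k, if H j k then f l (k l) ^ 2 * P (l.removeNth k) else 0) * L :=
        ENNReal.tsum_le_tsum hCS
    _ = (∑' k : Fin (n + 1) → A, f l (k l) ^ 2 * P (l.removeNth k)) * L := by
        rw [ENNReal.tsum_mul_right, ENNReal.tsum_comm]
        simp_rw [H, tsum_ite_momentum_eq (hσ 0)]
    _ = (∑' a, f l a ^ 2) * L ^ 2 := by
        rw [ENNReal.tsum_pi_eq_tsum_tsum_removeNth l (fun a b => f l a ^ 2 * P b)]
        simp_rw [ENNReal.tsum_mul_left, hP, ENNReal.tsum_mul_right]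
        ring

end Momentum

namespace AG

section Lattice

variable {d : ℕ}

noncomputable def toEuclidean : Zd d →+ EuclideanSpace ℝ (Fin d) :=
  (WithLp.addEquiv 2 (Fin d → ℝ)).symm.toAddMonoidHom.comp ((Int.castAddHom ℝ).compLeft (Fin d))

theorem enorm_eq_norm_toEuclidean (j : Zd d) : enorm j = ‖toEuclidean j‖ := by
  simp [enorm, EuclideanSpace.norm_eq, toEuclidean]

theorem enorm_nonneg (j : Zd d) : 0 ≤ enorm j := Real.sqrt_nonneg _

theorem abs_le_enorm (j : Zd d) (i : Fin d) : |(j i : ℝ)| ≤ enorm j :=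
  Real.abs_le_sqrt (single_le_sum (fun i _ => sq_nonneg ((j i : ℝ))) (mem_univ i))

theorem enorm_le_sum_of_momentum {r : ℕ} {σ : Fin (r + 1) → ℤ} (hσ : ∀ i, σ i = 1 ∨ σ i = -1)
    {j : Zd d} {k : Fin r → Zd d} (h : σ 0 • j + ∑ m, σ m.succ • k m = 0) :
    enorm j ≤ ∑ m, enorm (k m) := by
  rw [zsmul_add_eq_zero_iff_of_sign (hσ 0)] at h
  subst h
  simp only [enorm_eq_norm_toEuclidean, map_zsmul, map_neg, map_sum, norm_zsmul_of_sign (hσ _),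
    norm_neg]
  exact (norm_sum_le _ _).trans_eq (by simp only [norm_zsmul_of_sign (hσ _)])

noncomputable def weight (j : Zd d) : ℝ≥0∞ := ENNReal.ofReal (1 + enorm j)

theorem one_le_weight (j : Zd d) : 1 ≤ weight j :=
  ENNReal.one_le_ofReal.2 (by linarith [enorm_nonneg j])

theorem weight_ne_top (j : Zd d) : weight j ≠ ⊤ := ENNReal.ofReal_ne_top

theorem weight_ne_zero (j : Zd d) : weight j ≠ 0 := (one_le_weight j).trans_lt' one_pos |>.ne'

theorem weight_rpow (j : Zd d) (p : ℝ) : weight j ^ p = ENNReal.ofReal ((1 + enorm j) ^ p) :=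
  ENNReal.ofReal_rpow_of_pos (by linarith [enorm_nonneg j])

theorem weight_le_sum_of_momentum {n : ℕ} {σ : Fin (n + 2) → ℤ} (hσ : ∀ i, σ i = 1 ∨ σ i = -1)
    {j : Zd d} {k : Fin (n + 1) → Zd d} (h : σ 0 • j + ∑ m, σ m.succ • k m = 0) :
    weight j ≤ ∑ m, weight (k m) := by
  unfold weight
  rw [← ENNReal.ofReal_sum_of_nonneg fun m _ => by linarith [enorm_nonneg (k m)]]
  refine ENNReal.ofReal_le_ofReal ?_
  rw [sum_add_distrib, sum_const, card_univ, Fintype.card_fin, nsmul_eq_mul, mul_one]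
  linarith [enorm_le_sum_of_momentum hσ h, (Nat.one_le_cast (α := ℝ)).2 (Nat.succ_pos n)]

theorem weight_rpow_le_of_momentum {n : ℕ} {σ : Fin (n + 2) → ℤ}
    (hσ : ∀ i, σ i = 1 ∨ σ i = -1) {j : Zd d} {k : Fin (n + 1) → Zd d}
    (h : σ 0 • j + ∑ m, σ m.succ • k m = 0) {s : ℝ} (hs : 0 ≤ s) :
    weight j ^ s ≤ ((n + 1 : ℕ) : ℝ≥0∞) ^ s * ∑ m, weight (k m) ^ s := by
  simpa using ENNReal.rpow_le_card_rpow_mul_sum_rpow univ_nonempty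
    (weight_le_sum_of_momentum hσ h) hs

theorem tsum_weight_rpow_neg_ne_top {q : ℝ} (hq : (d : ℝ) < q) :
    ∑' j : Zd d, weight j ^ (-q) ≠ ⊤ := by
  rcases Nat.eq_zero_or_pos d with rfl | hd
  · rw [tsum_eq_single 0 fun j hj => (hj (Subsingleton.elim _ _)).elim, weight_rpow]
    exact ENNReal.ofReal_ne_top
  have hd' : (0 : ℝ) < d := by exact_mod_cast hd
  have hq0 : 0 < q := hd'.trans hq
  set g : ℤ → ℝ≥0∞ := fun n => ENNReal.ofReal (1 + |(n : ℝ)|) ^ (-(q / d))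
  have hcoord : ∀ j : Zd d, weight j ^ (-q) ≤ ∏ i, g (j i) := by
    intro j
    have hji : ∀ i, ENNReal.ofReal (1 + |(j i : ℝ)|) ≤ weight j := fun i =>
      ENNReal.ofReal_le_ofReal (by linarith [abs_le_enorm j i])
    calc weight j ^ (-q) = ∏ _i : Fin d, weight j ^ (-(q / d)) := by
          rw [prod_const, card_univ, Fintype.card_fin, ← ENNReal.rpow_mul_natCast]
          field_simp
      _ ≤ ∏ i, g (j i) := prod_le_prod' fun i _ => by
          simp only [g, ENNReal.rpow_neg]
          exact ENNReal.inv_le_inv.2 (ENNReal.rpow_le_rpow (hji i) (by positivity))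
  have hg : ∑' n, g n ≠ ⊤ := by
    have : ∀ n : ℤ, g n = ENNReal.ofReal ((1 + |(n : ℝ)|) ^ (-(q / d))) := fun n =>
      ENNReal.ofReal_rpow_of_pos (by positivity)
    rw [tsum_congr this, ← ENNReal.ofReal_tsum_of_nonneg (fun n => by positivity)
      (summable_one_add_abs_int_rpow_neg ((one_lt_div hd').2 hq))]
    exact ENNReal.ofReal_ne_top
  refine ne_top_of_le_ne_top ?_ (ENNReal.tsum_le_tsum hcoord)
  rw [ENNReal.tsum_pi_prod]
  exact ENNReal.prod_ne_top fun _ _ => hg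

end Lattice

section SobolevNorm

variable {d : ℕ}

noncomputable def eZNormSq (d : ℕ) (t : ℝ) (v : Zd d → ℂ) : ℝ≥0∞ :=
  ∑' j, weight j ^ (2 * t) * ‖v j‖ₑ ^ 2

theorem zNorm_nonneg (t : ℝ) (v : Zd d → ℂ) : 0 ≤ zNorm d t v := Real.sqrt_nonneg _

theorem one_add_enorm_rpow_mul_norm_sq_nonneg (t : ℝ) (v : Zd d → ℂ) (j : Zd d) :
    0 ≤ (1 + enorm j) ^ (2 * t) * ‖v j‖ ^ 2 :=
  mul_nonneg (Real.rpow_nonneg (by linarith [enorm_nonneg j]) _) (sq_nonneg _)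

theorem eZNormSq_eq_tsum_ofReal (t : ℝ) (v : Zd d → ℂ) :
    eZNormSq d t v = ∑' j, ENNReal.ofReal ((1 + enorm j) ^ (2 * t) * ‖v j‖ ^ 2) := by
  refine tsum_congr fun j => ?_
  rw [ENNReal.ofReal_mul (Real.rpow_nonneg (by linarith [enorm_nonneg j]) _), weight_rpow,
    ENNReal.ofReal_pow (norm_nonneg _), ofReal_norm]

theorem ofReal_zNorm_sq {t : ℝ} {v : Zd d → ℂ} (hv : MemZ d t v) :
    ENNReal.ofReal (zNorm d t v) ^ 2 = eZNormSq d t v := by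
  rw [eZNormSq_eq_tsum_ofReal, ← ENNReal.ofReal_tsum_of_nonneg
    (one_add_enorm_rpow_mul_norm_sq_nonneg t v) hv, ← ENNReal.ofReal_pow (zNorm_nonneg t v),
    zNorm, Real.sq_sqrt (tsum_nonneg (one_add_enorm_rpow_mul_norm_sq_nonneg t v))]

theorem memZ_of_eZNormSq_ne_top {t : ℝ} {v : Zd d → ℂ} (h : eZNormSq d t v ≠ ⊤) : MemZ d t v := by
  rw [eZNormSq_eq_tsum_ofReal] at h
  exact (ENNReal.summable_toReal h).congr fun j =>
    ENNReal.toReal_ofReal (one_add_enorm_rpow_mul_norm_sq_nonneg t v j)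

theorem memZ_and_zNorm_le_of_eZNormSq_le {t B : ℝ} {v : Zd d → ℂ} (hB : 0 ≤ B)
    (h : eZNormSq d t v ≤ ENNReal.ofReal B ^ 2) : MemZ d t v ∧ zNorm d t v ≤ B := by
  have hv := memZ_of_eZNormSq_ne_top (ne_top_of_le_ne_top (by simp) h)
  rw [← ofReal_zNorm_sq hv, ENNReal.pow_le_pow_left_iff two_ne_zero,
    ENNReal.ofReal_le_ofReal_iff hB] at h
  exact ⟨hv, h⟩

theorem eZNormSq_mono {t t' : ℝ} (htt : t' ≤ t) (v : Zd d → ℂ) :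
    eZNormSq d t' v ≤ eZNormSq d t v :=
  ENNReal.tsum_le_tsum fun j => by
    gcongr
    exact one_le_weight j

theorem MemZ.mono {t t' : ℝ} (htt : t' ≤ t) {v : Zd d → ℂ} (hv : MemZ d t v) : MemZ d t' v :=
  memZ_of_eZNormSq_ne_top <| ne_top_of_le_ne_top (by simp [← ofReal_zNorm_sq hv])
    (eZNormSq_mono htt v)

theorem sq_tsum_enorm_le (t : ℝ) (v : Zd d → ℂ) :
    (∑' j, ‖v j‖ₑ) ^ 2 ≤ (∑' j : Zd d, weight j ^ (-(2 * t))) * eZNormSq d t v :=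
  ENNReal.tsum_sq_le_tsum_mul_tsum_of_sq_le_mul fun j => by
    rw [← mul_assoc, ← ENNReal.rpow_add _ _ (weight_ne_zero j) (weight_ne_top j),
      neg_add_cancel, ENNReal.rpow_zero, one_mul]

end SobolevNorm

section Field

variable {d : ℕ}

theorem enorm_Xfield_le {r : ℕ} (σ : Fin (r + 1) → ℤ) {c : (Fin (r + 1) → Zd d) → ℂ} {M : ℝ}
    (hM : ∀ jv, ‖c jv‖ ≤ M) (u : Fin r → Zd d → ℂ) (j : Zd d) :
    ‖Xfield d r σ c u j‖ₑ ≤ ENNReal.ofReal M * signedConv σ (fun m x => ‖u m x‖ₑ) j := by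
  rw [signedConv, ← ENNReal.tsum_mul_left]
  refine enorm_tsum_le_tsum_enorm.trans (ENNReal.tsum_le_tsum fun k => ?_)
  split_ifs
  · rw [enorm_mul]
    simp only [enorm_eq_nnnorm, nnnorm_prod, ENNReal.ofNNReal_finsetProd]
    gcongr
    rw [← enorm_eq_nnnorm, ← ofReal_norm]
    exact ENNReal.ofReal_le_ofReal (hM _)
  · simp

theorem weight_rpow_mul_signedConv_le {n : ℕ} {σ : Fin (n + 2) → ℤ}
    (hσ : ∀ i, σ i = 1 ∨ σ i = -1) (f : Fin (n + 1) → Zd d → ℝ≥0∞) {s : ℝ} (hs : 0 ≤ s)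
    (j : Zd d) :
    weight j ^ s * signedConv σ f j ≤ ((n + 1 : ℕ) : ℝ≥0∞) ^ s *
      ∑ l, signedConv σ (Function.update f l fun x => weight x ^ s * f l x) j := by
  simp only [signedConv]
  rw [← ENNReal.tsum_mul_left, ← Summable.tsum_finsetSum fun _ _ => ENNReal.summable,
    ← ENNReal.tsum_mul_left]
  refine ENNReal.tsum_le_tsum fun k => ?_
  split_ifs with h
  · have hupdate : ∀ l, ∏ m, Function.update f l (fun x => weight x ^ s * f l x) m (k m) =
        weight (k l) ^ s * ∏ m, f m (k m) := fun l => by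
      rw [Fin.prod_univ_succAbove _ l, Fin.prod_univ_succAbove (fun m => f m (k m)) l]
      simp [mul_assoc]
    simp only [hupdate, ← sum_mul, ← mul_assoc]
    gcongr
    exact weight_rpow_le_of_momentum hσ h hs
  · simp

theorem eZNormSq_Xfield_le {n : ℕ} {σ : Fin (n + 2) → ℤ} (hσ : ∀ i, σ i = 1 ∨ σ i = -1)
    {c : (Fin (n + 2) → Zd d) → ℂ} {M : ℝ} (hM : ∀ jv, ‖c jv‖ ≤ M) (u : Fin (n + 1) → Zd d → ℂ)
    {s : ℝ} (hs : 0 ≤ s) :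
    eZNormSq d s (Xfield d (n + 1) σ c u) ≤
      ENNReal.ofReal M ^ 2 * (((n + 1 : ℕ) : ℝ≥0∞) ^ s) ^ 2 * (n + 1 : ℕ) *
        ∑ l, eZNormSq d s (u l) * (∏ i, ∑' x, ‖u (l.succAbove i) x‖ₑ) ^ 2 := by
  set A : Fin (n + 1) → Zd d → ℝ≥0∞ := fun m x => ‖u m x‖ₑ
  set G : Fin (n + 1) → Zd d → ℝ≥0∞ :=
    fun l => signedConv σ (Function.update A l fun x => weight x ^ s * A l x)
  set K := ENNReal.ofReal M ^ 2 * (((n + 1 : ℕ) : ℝ≥0∞) ^ s) ^ 2 * (n + 1 : ℕ)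
  have hsq : ∀ x : Zd d, weight x ^ (2 * s) = (weight x ^ s) ^ 2 := fun x => by
    rw [mul_comm, ENNReal.rpow_mul, ENNReal.rpow_two]
  have hpointwise : ∀ j, weight j ^ (2 * s) * ‖Xfield d (n + 1) σ c u j‖ₑ ^ 2 ≤
      K * ∑ l, G l j ^ 2 := by
    intro j
    calc weight j ^ (2 * s) * ‖Xfield d (n + 1) σ c u j‖ₑ ^ 2
        = (weight j ^ s * ‖Xfield d (n + 1) σ c u j‖ₑ) ^ 2 := by rw [mul_pow, hsq]
      _ ≤ (ENNReal.ofReal M * (weight j ^ s * signedConv σ A j)) ^ 2 := by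
          rw [mul_left_comm]
          gcongr
          exact enorm_Xfield_le σ hM u j
      _ ≤ (ENNReal.ofReal M * (((n + 1 : ℕ) : ℝ≥0∞) ^ s * ∑ l, G l j)) ^ 2 := by
          gcongr (_ * ?_) ^ 2
          exact weight_rpow_mul_signedConv_le hσ A hs j
      _ ≤ K * ∑ l, G l j ^ 2 := by
          simp only [K, mul_pow, mul_assoc]
          gcongr
          simpa using ENNReal.sq_sum_le_card_mul_sum_sq fun l => G l j
  have hYoung : ∀ l, ∑' j, G l j ^ 2 ≤ eZNormSq d s (u l) * (∏ i, ∑' x, A (l.succAbove i) x) ^ 2 :=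
    fun l => by
      refine (tsum_signedConv_sq_le hσ _ l).trans_eq ?_
      simp [eZNormSq, A, mul_pow, hsq]
  calc eZNormSq d s (Xfield d (n + 1) σ c u) ≤ ∑' j, K * ∑ l, G l j ^ 2 :=
        ENNReal.tsum_le_tsum hpointwise
    _ = K * ∑ l, ∑' j, G l j ^ 2 := by
        rw [ENNReal.tsum_mul_left, Summable.tsum_finsetSum fun _ _ => ENNReal.summable]
    _ ≤ _ := by
        gcongr with l
        exact hYoung l

theorem eZNormSq_Xfield_le_sq_sum_prod_zNorm {n : ℕ} {σ : Fin (n + 2) → ℤ}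
    (hσ : ∀ i, σ i = 1 ∨ σ i = -1) {c : (Fin (n + 2) → Zd d) → ℂ} {M : ℝ}
    (hM : ∀ jv, ‖c jv‖ ≤ M) {u : Fin (n + 1) → Zd d → ℂ} {s s₀ : ℝ} (hs : 0 ≤ s)
    (hs₀ : s₀ ≤ s) (hu : ∀ l, MemZ d s (u l)) :
    eZNormSq d s (Xfield d (n + 1) σ c u) ≤
      ENNReal.ofReal M ^ 2 * ((((n + 1 : ℕ) : ℝ≥0∞) ^ s) ^ 2 * (n + 1 : ℕ) *
        (∑' x : Zd d, weight x ^ (-(2 * s₀))) ^ n) *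
      ENNReal.ofReal (∑ l, ∏ m, if m = l then zNorm d s (u m) else zNorm d s₀ (u m)) ^ 2 := by
  set S := ∑' x : Zd d, weight x ^ (-(2 * s₀))
  have hprod_nonneg : ∀ l : Fin (n + 1),
      0 ≤ ∏ m, (if m = l then zNorm d s (u m) else zNorm d s₀ (u m)) := fun l =>
    prod_nonneg fun m _ => by split_ifs <;> exact zNorm_nonneg _ _
  calc eZNormSq d s (Xfield d (n + 1) σ c u)
      ≤ ENNReal.ofReal M ^ 2 * (((n + 1 : ℕ) : ℝ≥0∞) ^ s) ^ 2 * (n + 1 : ℕ) *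
        ∑ l, eZNormSq d s (u l) * (∏ i, ∑' x, ‖u (l.succAbove i) x‖ₑ) ^ 2 :=
        eZNormSq_Xfield_le hσ hM u hs
    _ ≤ ENNReal.ofReal M ^ 2 * (((n + 1 : ℕ) : ℝ≥0∞) ^ s) ^ 2 * (n + 1 : ℕ) *
        ∑ l, eZNormSq d s (u l) * ∏ i, (S * eZNormSq d s₀ (u (l.succAbove i))) := by
        gcongr with l
        rw [← prod_pow]
        gcongr with i
        exact sq_tsum_enorm_le s₀ _
    _ = ENNReal.ofReal M ^ 2 * ((((n + 1 : ℕ) : ℝ≥0∞) ^ s) ^ 2 * (n + 1 : ℕ) * S ^ n) *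
          ∑ l, ENNReal.ofReal
            (∏ m, (if m = l then zNorm d s (u m) else zNorm d s₀ (u m))) ^ 2 := by
        simp only [ENNReal.ofReal_prod_ite_sq (fun m => zNorm_nonneg s (u m))
          (fun m => zNorm_nonneg s₀ (u m)), ofReal_zNorm_sq (hu _),
          ofReal_zNorm_sq ((hu _).mono hs₀), prod_mul_distrib, prod_const, card_univ,
          Fintype.card_fin, mul_sum]
        exact sum_congr rfl fun l _ => by ring
    _ ≤ _ := by
        gcongr
        rw [ENNReal.ofReal_sum_of_nonneg fun l _ => hprod_nonneg l]
        exact sum_sq_le_sq_sum_of_nonneg fun _ _ => zero_le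

end Field

theorem stmt_1_general (d : ℕ) (r : ℕ) (hr : 1 ≤ r)
    (s s₀ : ℝ) (hs₀ : (d : ℝ) / 2 < s₀) (hs : s₀ < s) :
    ∃ C : ℝ, 0 < C ∧
      ∀ (σ : Fin (r + 1) → ℤ), (∀ l, σ l = 1 ∨ σ l = -1) →
      ∀ (c : (Fin (r + 1) → Zd d) → ℂ),
        (∀ (π : Equiv.Perm (Fin (r + 1))) (jv : Fin (r + 1) → Zd d), c (jv ∘ π) = c jv) →
      ∀ M : ℝ, (∀ jv, ‖c jv‖ ≤ M) →
      ∀ u : Fin r → (Zd d → ℂ), (∀ l, MemZ d s (u l)) →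
        MemZ d s (Xfield d r σ c u) ∧
        zNorm d s (Xfield d r σ c u) ≤
          C * M * ∑ l : Fin r,
            ∏ m : Fin r, (if m = l then zNorm d s (u m) else zNorm d s₀ (u m)) := by
  obtain ⟨n, rfl⟩ : ∃ n, r = n + 1 := ⟨r - 1, by omega⟩
  have hs₀pos : 0 < s₀ := lt_of_le_of_lt (by positivity) hs₀
  set K : ℝ≥0∞ := (((n + 1 : ℕ) : ℝ≥0∞) ^ s) ^ 2 * (n + 1 : ℕ) *
    (∑' x : Zd d, weight x ^ (-(2 * s₀))) ^ n
  have hK : K ≠ ⊤ := by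
    have : ((n + 1 : ℕ) : ℝ≥0∞) ^ s ≠ ⊤ := ENNReal.rpow_ne_top_of_nonneg (by linarith) (by simp)
    have := tsum_weight_rpow_neg_ne_top (d := d) (q := 2 * s₀) (by linarith)
    finiteness
  refine ⟨K.toReal + 1, by positivity, fun σ hσ c _ M hM u hu => ?_⟩
  have hM₀ : 0 ≤ M := (norm_nonneg _).trans (hM 0)
  have hR : 0 ≤ ∑ l, ∏ m, (if m = l then zNorm d s (u m) else zNorm d s₀ (u m)) :=
    sum_nonneg fun l _ => prod_nonneg fun m _ => by split_ifs <;> exact zNorm_nonneg _ _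
  refine memZ_and_zNorm_le_of_eZNormSq_le (by positivity) ?_
  calc eZNormSq d s (Xfield d (n + 1) σ c u)
      ≤ ENNReal.ofReal M ^ 2 * K * ENNReal.ofReal
          (∑ l, ∏ m, if m = l then zNorm d s (u m) else zNorm d s₀ (u m)) ^ 2 :=
        eZNormSq_Xfield_le_sq_sum_prod_zNorm hσ hM (by linarith) hs.le hu
    _ ≤ ENNReal.ofReal M ^ 2 * ENNReal.ofReal (K.toReal + 1) ^ 2 * ENNReal.ofReal
          (∑ l, ∏ m, if m = l then zNorm d s (u m) else zNorm d s₀ (u m)) ^ 2 := by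
        gcongr
        exact ENNReal.le_ofReal_toReal_add_one_sq hK
    _ = _ := by
        rw [ENNReal.ofReal_mul (by positivity), ENNReal.ofReal_mul (by positivity)]
        ring

/-- technical Lemma, Appendix.
Let `s > s₀ > d/2`, `r ≥ 1`, `σ₀,…,σ_r ∈ {−1,1}` and let `X_{j,j₁,…,j_r}` be completely
symmetric coefficients with `sup |X| ≤ M < ∞`. Then there is `C = C_{s,r} > 0` with
`‖X(u⁽¹⁾,…,u⁽ʳ⁾)‖_s ≤ C M Σ_{l} ‖u⁽¹⁾‖_{s₀} ⋯ ‖u⁽ˡ⁾‖_s ⋯ ‖u⁽ʳ⁾‖_{s₀}`. -/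
theorem stmt_1 (d : ℕ) (hd : 1 ≤ d) (r : ℕ) (hr : 1 ≤ r)
    (s s₀ : ℝ) (hs₀ : (d : ℝ) / 2 < s₀) (hs : s₀ < s) :
    ∃ C : ℝ, 0 < C ∧
      ∀ (σ : Fin (r + 1) → ℤ), (∀ l, σ l = 1 ∨ σ l = -1) →
      ∀ (c : (Fin (r + 1) → Zd d) → ℂ),
        (∀ (π : Equiv.Perm (Fin (r + 1))) (jv : Fin (r + 1) → Zd d), c (jv ∘ π) = c jv) →
      ∀ M : ℝ, (∀ jv, ‖c jv‖ ≤ M) →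
      ∀ u : Fin r → (Zd d → ℂ), (∀ l, MemZ d s (u l)) →
        MemZ d s (Xfield d r σ c u) ∧
        zNorm d s (Xfield d r σ c u) ≤
          C * M * ∑ l : Fin r,
            ∏ m : Fin r, (if m = l then zNorm d s (u m) else zNorm d s₀ (u m)) :=
  stmt_1_general d r hr s s₀ hs₀ hs

end AG
end

section
/- Let P₁ ∈ 𝒫_{r₁} and P₂ ∈ 𝒫_{r₂}. Then the Poisson bracket {P₁;P₂}, defined by {P₁;P₂} := i Σ_{j∈ℤ^d} ( ∂P₁/∂u_{(j,−)} · ∂P₂/∂u_{(j,+)} − ∂P₁/∂u_{(j,+)} · ∂P₂/∂u_{(j,−)} ), is a well-defined element of 𝒫_{r₁+r₂−2}, and for every R > 0 one has ‖{P₁;P₂}‖_R ≤ (2 r₁ r₂ / R²) · ‖P₁‖_R · ‖P₂‖_R. -/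
open scoped BigOperators

namespace AG

abbrev Idx (d : ℕ) := Zd d × Bool

noncomputable def inorm {d : ℕ} (J : Idx d) : ℝ := enorm J.1

def sgn (b : Bool) : ℤ := if b then 1 else -1

noncomputable def sgnC (b : Bool) : ℂ := if b then 1 else -1

def conjIdx {d : ℕ} (J : Idx d) : Idx d := (J.1, !J.2)

abbrev Seq (d : ℕ) := Idx d → ℂ

noncomputable def sobNormSq (d : ℕ) (s : ℝ) (u : Seq d) : ℝ :=
  ∑' J : Idx d, (1 + inorm J) ^ (2 * s) * ‖u J‖ ^ 2

noncomputable def sobNorm (d : ℕ) (s : ℝ) (u : Seq d) : ℝ := Real.sqrt (sobNormSq d s u)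

def MemSob (d : ℕ) (s : ℝ) (u : Seq d) : Prop :=
  Summable (fun J : Idx d => (1 + inorm J) ^ (2 * s) * ‖u J‖ ^ 2)

noncomputable def momentum {d r : ℕ} (Jv : Fin r → Idx d) : Zd d :=
  ∑ l, sgn ((Jv l).2) • ((Jv l).1)

structure Poly (d r : ℕ) where
  coeff : (Fin r → Idx d) → ℂ
  symm : ∀ (π : Equiv.Perm (Fin r)) (Jv : Fin r → Idx d), coeff (Jv ∘ π) = coeff Jv
  mom : ∀ Jv, coeff Jv ≠ 0 → momentum Jv = 0
  reality : ∀ Jv, (starRingEnd ℂ) (coeff (fun l => conjIdx (Jv l))) = coeff Jv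
  bdd : ∃ M : ℝ, ∀ Jv, ‖coeff Jv‖ ≤ M

noncomputable def Poly.norm {d r : ℕ} (P : Poly d r) (R : ℝ) : ℝ :=
  (⨆ Jv : Fin r → Idx d, ‖P.coeff Jv‖) * R ^ r

noncomputable def Poly.eval {d r : ℕ} (P : Poly d r) (u : Seq d) : ℂ :=
  ∑' Jv : Fin r → Idx d, P.coeff Jv * ∏ l, u (Jv l)

noncomputable def Poly.pderiv {d r : ℕ} (P : Poly d r) (K : Idx d) (u : Seq d) : ℂ :=
  ∑' Jv : Fin r → Idx d, ∑ l : Fin r,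
    (if Jv l = K then P.coeff Jv * ∏ m ∈ Finset.univ.erase l, u (Jv m) else 0)

noncomputable def Poly.field {d r : ℕ} (P : Poly d r) (u : Seq d) : Seq d :=
  fun J => Complex.I * sgnC J.2 * P.pderiv (conjIdx J) u

noncomputable def freqSum {d r : ℕ} (ω : Zd d → ℝ) (Jv : Fin r → Idx d) : ℝ :=
  ∑ l, (sgn ((Jv l).2) : ℝ) * ω ((Jv l).1)

/-- The (formal) Poisson bracket `{P₁;P₂}` evaluated at `u`:
`i ∑_{ j ∈ ℤ^d } ( ∂P₁/∂u_{(j,−)} ∂P₂/∂u_{(j,+)} − ∂P₁/∂u_{(j,+)} ∂P₂/∂u_{(j,−)} )`,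
where `(j,true)=(j,+)` and `(j,false)=(j,−)`. -/
noncomputable def bracketEval {d r₁ r₂ : ℕ} (P₁ : Poly d r₁) (P₂ : Poly d r₂)
    (u : Seq d) : ℂ :=
  Complex.I * ∑' j : Zd d,
    (P₁.pderiv (j, false) u * P₂.pderiv (j, true) u
      - P₁.pderiv (j, true) u * P₂.pderiv (j, false) u)

/-!
At a finitely supported `u`, symmetry of the coefficients gives `∂P/∂u_K = r ∑_A P_{(K,A)} u^A`,
so `{P₁;P₂} = i r₁ r₂ ∑_j ∑_{A,B} (P₁_{(j,−),A} P₂_{(j,+),B} − P₁_{(j,+),A} P₂_{(j,−),B}) u^A u^B`.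
Zero momentum of `P₁` forces `j = ℳ(A)` in the first product and `j = −ℳ(A)` in the second, so
for each `(A,B)` only one contracted index contributes, and zero momentum of `P₂` then gives
`ℳ(A) + ℳ(B) = 0`. Symmetrizing the resulting coefficient of `u^A u^B` yields an element of
`𝒫_{r₁+r₂−2}`; it is a difference of two products of coefficients, each at most
`‖P₁‖_R ‖P₂‖_R / R^{r₁+r₂}`, times `r₁ r₂`, whence the estimate.
-/

lemma sum_piFinset_add_eq_sum_product {α M : Type*} [AddCommMonoid M] {m n : ℕ} (T : Finset α)
    (F : (Fin (m + n) → α) → M) :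
    ∑ Jv ∈ Fintype.piFinset (fun _ => T), F Jv
      = ∑ p ∈ Fintype.piFinset (fun _ : Fin m => T) ×ˢ Fintype.piFinset (fun _ : Fin n => T),
          F (Fin.append p.1 p.2) :=
  (Finset.sum_equiv (Fin.appendEquiv m n)
    (fun p => by simp [Fintype.mem_piFinset, Fin.forall_fin_add]) (fun _ _ => rfl)).symm

lemma hasSum_sum_of_ne_zero_imp_eq {ι β M : Type*} [AddCommMonoid M] [TopologicalSpace M]
    [ContinuousAdd M] (s : Finset β) (f : ι → β → M) (g : β → ι) (hf : ∀ j b, f j b ≠ 0 → j = g b) :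
    HasSum (fun j => ∑ b ∈ s, f j b) (∑ b ∈ s, f (g b) b) :=
  hasSum_sum fun b _ => hasSum_single (g b) fun j hj => by_contra fun h => hj (hf j b h)

section Momentum

variable {d : ℕ}

lemma sgn_not (b : Bool) : sgn (!b) = -sgn b := by
  cases b <;> simp [sgn]

lemma momentum_cons {r : ℕ} (K : Idx d) (A : Fin r → Idx d) :
    momentum (Fin.cons K A : Fin (r + 1) → Idx d) = sgn K.2 • K.1 + momentum A := by
  simp [momentum, Fin.sum_univ_succ]

lemma momentum_conjIdx {r : ℕ} (A : Fin r → Idx d) :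
    momentum (fun l => conjIdx (A l)) = -momentum A := by
  simp [momentum, conjIdx, sgn_not]

lemma momentum_comp_perm {r : ℕ} (Jv : Fin r → Idx d) (π : Equiv.Perm (Fin r)) :
    momentum (Jv ∘ π) = momentum Jv :=
  Equiv.sum_comp π fun l => sgn (Jv l).2 • (Jv l).1

lemma momentum_eq_add_castAdd_natAdd {m n : ℕ} (Jv : Fin (m + n) → Idx d) :
    momentum Jv
      = momentum (fun i => Jv (Fin.castAdd n i)) + momentum (fun i => Jv (Fin.natAdd m i)) :=
  Fin.sum_univ_add _

lemma conjIdx_cons {r : ℕ} (K : Idx d) (A : Fin r → Idx d) :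
    (fun l => conjIdx ((Fin.cons K A : Fin (r + 1) → Idx d) l))
      = Fin.cons (conjIdx K) (fun l => conjIdx (A l)) := by
  funext l
  cases l using Fin.cases <;> simp

lemma Poly.eq_momentum_of_coeff_cons_false_ne_zero {m : ℕ} (P : Poly d (m + 1)) {j : Zd d}
    {A : Fin m → Idx d} (h : P.coeff (Fin.cons (j, false) A) ≠ 0) : j = momentum A := by
  have := P.mom _ h
  rw [momentum_cons] at this
  simpa [sgn, neg_add_eq_zero] using this

lemma Poly.eq_neg_momentum_of_coeff_cons_true_ne_zero {m : ℕ} (P : Poly d (m + 1)) {j : Zd d}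
    {A : Fin m → Idx d} (h : P.coeff (Fin.cons (j, true) A) ≠ 0) : j = -momentum A := by
  have := P.mom _ h
  rw [momentum_cons] at this
  simpa [sgn] using eq_neg_of_add_eq_zero_left this

end Momentum

section FiniteSupport

variable {d : ℕ} {u : Seq d} {T : Finset (Idx d)}

lemma prod_eq_zero_of_notMem_piFinset (hT : ∀ J, u J ≠ 0 → J ∈ T) {k : ℕ}
    {A : Fin k → Idx d} (hA : A ∉ Fintype.piFinset fun _ => T) : ∏ i, u (A i) = 0 := by
  obtain ⟨i, hi⟩ : ∃ i, A i ∉ T := by simpa [Fintype.mem_piFinset] using hA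
  exact Finset.prod_eq_zero (Finset.mem_univ i) (by_contra fun h => hi (hT _ h))

lemma tsum_mul_prod_eq_sum_piFinset (hT : ∀ J, u J ≠ 0 → J ∈ T) {k : ℕ}
    (c : (Fin k → Idx d) → ℂ) :
    ∑' A, c A * ∏ i, u (A i) = ∑ A ∈ Fintype.piFinset (fun _ => T), c A * ∏ i, u (A i) :=
  tsum_eq_sum fun A hA => by rw [prod_eq_zero_of_notMem_piFinset hT hA, mul_zero]

lemma prod_erase_insertNth {β : Type*} {m : ℕ} (l : Fin (m + 1)) (K : β) (A : Fin m → β)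
    (g : β → ℂ) :
    ∏ i ∈ Finset.univ.erase l, g ((l.insertNth K A : Fin (m + 1) → β) i) = ∏ i, g (A i) := by
  rw [← Finset.compl_singleton, ← Fin.image_succAbove_univ,
    Finset.prod_image fun _ _ _ _ h => Fin.succAbove_right_injective h]
  simp

/-- By symmetry of the coefficients, each slot `l` of `Poly.pderiv` contributes the same sum. -/
lemma Poly.hasSum_pderiv_summand {m : ℕ} (P : Poly d (m + 1)) (K : Idx d) (u : Seq d)
    (l : Fin (m + 1)) {a : ℂ} (h : HasSum (fun A => P.coeff (Fin.cons K A) * ∏ i, u (A i)) a) :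
    HasSum (fun Jv : Fin (m + 1) → Idx d =>
      if Jv l = K then P.coeff Jv * ∏ i ∈ Finset.univ.erase l, u (Jv i) else 0) a := by
  have hsupp : ∀ Jv ∉ Set.range (l.insertNth (α := fun _ => Idx d) K),
      (if Jv l = K then P.coeff Jv * ∏ i ∈ Finset.univ.erase l, u (Jv i) else 0) = 0 := by
    intro Jv hJv
    rw [if_neg]
    rintro rfl
    exact hJv ⟨l.removeNth Jv, Fin.insertNth_self_removeNth l Jv⟩
  rw [← (Fin.insertNth_right_injective (α := fun _ => Idx d) (p := l) K).hasSum_iff hsupp]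
  convert h using 2 with A
  rw [Function.comp_apply, Fin.insertNth_apply_same, if_pos rfl, prod_erase_insertNth,
    ← Fin.cons_comp_cycleRange, P.symm]

lemma Poly.pderiv_eq_sum {m : ℕ} (P : Poly d (m + 1)) (K : Idx d)
    (hT : ∀ J, u J ≠ 0 → J ∈ T) :
    P.pderiv K u = ((m + 1 : ℕ) : ℂ)
      * ∑ A ∈ Fintype.piFinset (fun _ => T), P.coeff (Fin.cons K A) * ∏ i, u (A i) := by
  have hsum : HasSum (fun A => P.coeff (Fin.cons K A) * ∏ i, u (A i))
      (∑ A ∈ Fintype.piFinset (fun _ => T), P.coeff (Fin.cons K A) * ∏ i, u (A i)) :=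
    hasSum_sum_of_ne_finset_zero fun A hA => by
      rw [prod_eq_zero_of_notMem_piFinset hT hA, mul_zero]
  rw [Poly.pderiv, (hasSum_sum fun l _ => P.hasSum_pderiv_summand K u l hsum).tsum_eq,
    Finset.sum_const, Finset.card_univ, Fintype.card_fin, nsmul_eq_mul]

end FiniteSupport

section Symmetrize

variable {α : Type*} {r : ℕ}

noncomputable def symmetrize (c : (Fin r → α) → ℂ) (Jv : Fin r → α) : ℂ :=
  (r.factorial : ℂ)⁻¹ * ∑ π : Equiv.Perm (Fin r), c (Jv ∘ π)

lemma symmetrize_comp_perm (c : (Fin r → α) → ℂ) (ρ : Equiv.Perm (Fin r)) (Jv : Fin r → α) :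
    symmetrize c (Jv ∘ ρ) = symmetrize c Jv := by
  unfold symmetrize
  exact congrArg _ (Equiv.sum_comp (Equiv.mulLeft ρ) fun π => c (Jv ∘ π))

lemma norm_symmetrize_le (c : (Fin r → α) → ℂ) {M : ℝ} (hM : ∀ Jv, ‖c Jv‖ ≤ M)
    (Jv : Fin r → α) : ‖symmetrize c Jv‖ ≤ M := by
  have hfac : (0 : ℝ) < r.factorial := mod_cast r.factorial_pos
  rw [symmetrize, norm_mul, norm_inv, Complex.norm_natCast, inv_mul_le_iff₀ hfac]
  calc ‖∑ π : Equiv.Perm (Fin r), c (Jv ∘ π)‖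
      ≤ ∑ _π : Equiv.Perm (Fin r), M := norm_sum_le_of_le _ fun π _ => hM _
    _ = r.factorial * M := by simp [Fintype.card_perm]

lemma sum_piFinset_comp_perm {M : Type*} [AddCommMonoid M] (T : Finset α)
    (F : (Fin r → α) → M) (π : Equiv.Perm (Fin r)) :
    ∑ Jv ∈ Fintype.piFinset (fun _ => T), F (Jv ∘ π)
      = ∑ Jv ∈ Fintype.piFinset (fun _ => T), F Jv :=
  Finset.sum_equiv (Equiv.arrowCongr π.symm (Equiv.refl α))
    (fun Jv => by
      simpa [Fintype.mem_piFinset] using (π.forall_congr_right (q := fun a => Jv a ∈ T)).symm)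
    (fun _ _ => rfl)

lemma sum_piFinset_symmetrize_mul_prod (c : (Fin r → α) → ℂ) (T : Finset α) (u : α → ℂ) :
    ∑ Jv ∈ Fintype.piFinset (fun _ => T), symmetrize c Jv * ∏ l, u (Jv l)
      = ∑ Jv ∈ Fintype.piFinset (fun _ => T), c Jv * ∏ l, u (Jv l) := by
  have hfac : (r.factorial : ℂ) ≠ 0 := mod_cast r.factorial_ne_zero
  have hperm : ∀ π : Equiv.Perm (Fin r),
      ∑ Jv ∈ Fintype.piFinset (fun _ => T), c (Jv ∘ π) * ∏ l, u (Jv l)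
        = ∑ Jv ∈ Fintype.piFinset (fun _ => T), c Jv * ∏ l, u (Jv l) := fun π => by
    rw [← sum_piFinset_comp_perm T (fun Jv => c Jv * ∏ l, u (Jv l)) π]
    exact Finset.sum_congr rfl fun Jv _ => by
      rw [Function.comp_def, Equiv.prod_comp π fun l => u (Jv l)]
  simp_rw [symmetrize, mul_assoc, ← Finset.mul_sum, Finset.sum_mul]
  rw [Finset.sum_comm, Finset.sum_congr rfl fun π _ => hperm π, Finset.sum_const,
    Finset.card_univ, Fintype.card_perm, Fintype.card_fin, nsmul_eq_mul,
    inv_mul_cancel_left₀ hfac]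

end Symmetrize

section Symmetrization

variable {d r : ℕ}

noncomputable def Poly.symmetrization (c : (Fin r → Idx d) → ℂ)
    (hmom : ∀ Jv, c Jv ≠ 0 → momentum Jv = 0)
    (hreal : ∀ Jv, (starRingEnd ℂ) (c fun l => conjIdx (Jv l)) = c Jv)
    (hbdd : ∃ M : ℝ, ∀ Jv, ‖c Jv‖ ≤ M) : Poly d r where
  coeff := symmetrize c
  symm := symmetrize_comp_perm c
  mom Jv h := by
    obtain ⟨π, -, hπ⟩ := Finset.exists_ne_zero_of_sum_ne_zero (right_ne_zero_of_mul h)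
    rw [← momentum_comp_perm Jv π]
    exact hmom _ hπ
  reality Jv := by
    simp only [symmetrize, map_mul, map_inv₀, map_natCast, map_sum]
    exact congrArg _ (Finset.sum_congr rfl fun π _ => hreal (Jv ∘ π))
  bdd := hbdd.imp fun _ hM => norm_symmetrize_le c hM

lemma Poly.eval_symmetrization {u : Seq d} {T : Finset (Idx d)} (hT : ∀ J, u J ≠ 0 → J ∈ T)
    (c : (Fin r → Idx d) → ℂ) (hmom hreal hbdd) :
    (Poly.symmetrization c hmom hreal hbdd).eval u
      = ∑ Jv ∈ Fintype.piFinset (fun _ => T), c Jv * ∏ l, u (Jv l) := by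
  rw [Poly.eval, tsum_mul_prod_eq_sum_piFinset hT]
  exact sum_piFinset_symmetrize_mul_prod c T u

lemma Poly.norm_coeff_le_iSup (P : Poly d r) (Jv : Fin r → Idx d) :
    ‖P.coeff Jv‖ ≤ ⨆ Jv, ‖P.coeff Jv‖ := by
  obtain ⟨M, hM⟩ := P.bdd
  exact le_ciSup ⟨M, Set.forall_mem_range.2 hM⟩ Jv

lemma Poly.norm_coeff_le_norm_div (P : Poly d r) {R : ℝ} (hR : 0 < R) (Jv : Fin r → Idx d) :
    ‖P.coeff Jv‖ ≤ P.norm R / R ^ r := by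
  rw [Poly.norm, mul_div_cancel_right₀ _ (pow_pos hR r).ne']
  exact P.norm_coeff_le_iSup Jv

lemma Poly.norm_le_of_norm_coeff_le (P : Poly d r) {M R : ℝ} (hM : ∀ Jv, ‖P.coeff Jv‖ ≤ M)
    (hR : 0 ≤ R) : P.norm R ≤ M * R ^ r :=
  mul_le_mul_of_nonneg_right (ciSup_le hM) (pow_nonneg hR r)

end Symmetrization

section Bracket

variable {d m₁ m₂ : ℕ} (P₁ : Poly d (m₁ + 1)) (P₂ : Poly d (m₂ + 1))

/-- The coefficient of `u^A u^B` in `{P₁;P₂}`, before symmetrization: zero momentum leaves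
only the contracted index `j = ℳ(A)` in the first product and `j = -ℳ(A)` in the second. -/
noncomputable def bracketCoeff (A : Fin m₁ → Idx d) (B : Fin m₂ → Idx d) : ℂ :=
  Complex.I * ((m₁ + 1 : ℕ) : ℂ) * ((m₂ + 1 : ℕ) : ℂ) *
    (P₁.coeff (Fin.cons (momentum A, false) A) * P₂.coeff (Fin.cons (momentum A, true) B)
      - P₁.coeff (Fin.cons (-momentum A, true) A) * P₂.coeff (Fin.cons (-momentum A, false) B))

lemma momentum_add_eq_zero_of_bracketCoeff_ne_zero {A : Fin m₁ → Idx d} {B : Fin m₂ → Idx d}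
    (h : bracketCoeff P₁ P₂ A B ≠ 0) : momentum A + momentum B = 0 := by
  have h' := right_ne_zero_of_mul h
  by_cases hfst : P₁.coeff (Fin.cons (momentum A, false) A)
      * P₂.coeff (Fin.cons (momentum A, true) B) = 0
  · rw [hfst, zero_sub, neg_ne_zero] at h'
    rw [← P₂.eq_momentum_of_coeff_cons_false_ne_zero (right_ne_zero_of_mul h'), add_neg_cancel]
  · rw [P₂.eq_neg_momentum_of_coeff_cons_true_ne_zero (right_ne_zero_of_mul hfst),
      neg_add_cancel]

lemma conj_bracketCoeff_conjIdx (A : Fin m₁ → Idx d) (B : Fin m₂ → Idx d) :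
    (starRingEnd ℂ) (bracketCoeff P₁ P₂ (fun l => conjIdx (A l)) (fun l => conjIdx (B l)))
      = bracketCoeff P₁ P₂ A B := by
  have hconj : ∀ {m : ℕ} (P : Poly d (m + 1)) (j : Zd d) (σ : Bool) (C : Fin m → Idx d),
      P.coeff (Fin.cons (j, σ) fun l => conjIdx (C l))
        = (starRingEnd ℂ) (P.coeff (Fin.cons (j, !σ) C)) := fun P j σ C => by
    rw [← P.reality, conjIdx_cons]
    simp [conjIdx]
  simp only [bracketCoeff, momentum_conjIdx, neg_neg, hconj, Bool.not_true, Bool.not_false,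
    map_mul, map_sub, map_natCast, Complex.conj_I, Complex.conj_conj]
  ring

lemma norm_bracketCoeff_le {M₁ M₂ : ℝ} (hM₁ : ∀ Jv, ‖P₁.coeff Jv‖ ≤ M₁)
    (hM₂ : ∀ Jv, ‖P₂.coeff Jv‖ ≤ M₂) (A : Fin m₁ → Idx d) (B : Fin m₂ → Idx d) :
    ‖bracketCoeff P₁ P₂ A B‖ ≤ 2 * ((m₁ + 1 : ℕ) : ℝ) * ((m₂ + 1 : ℕ) : ℝ) * M₁ * M₂ := by
  have hM₁0 : 0 ≤ M₁ := (norm_nonneg _).trans (hM₁ fun _ => (0, true))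
  have hprod : ∀ J₁ J₂, ‖P₁.coeff J₁ * P₂.coeff J₂‖ ≤ M₁ * M₂ := fun J₁ J₂ => by
    rw [norm_mul]
    exact mul_le_mul (hM₁ J₁) (hM₂ J₂) (norm_nonneg _) hM₁0
  rw [bracketCoeff, norm_mul, norm_mul, norm_mul, Complex.norm_I, Complex.norm_natCast,
    Complex.norm_natCast, one_mul]
  calc _ ≤ ((m₁ + 1 : ℕ) : ℝ) * ((m₂ + 1 : ℕ) : ℝ) * (M₁ * M₂ + M₁ * M₂) := by
        gcongr
        exact (norm_sub_le _ _).trans (add_le_add (hprod _ _) (hprod _ _))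
    _ = _ := by ring

noncomputable def Poly.bracket : Poly d (m₁ + m₂) :=
  Poly.symmetrization
    (fun Jv =>
      bracketCoeff P₁ P₂ (fun i => Jv (Fin.castAdd m₂ i)) (fun i => Jv (Fin.natAdd m₁ i)))
    (fun Jv h => (momentum_eq_add_castAdd_natAdd Jv).trans
      (momentum_add_eq_zero_of_bracketCoeff_ne_zero P₁ P₂ h))
    (fun _ => conj_bracketCoeff_conjIdx P₁ P₂ _ _)
    ⟨_, fun _ => norm_bracketCoeff_le P₁ P₂ P₁.norm_coeff_le_iSup P₂.norm_coeff_le_iSup _ _⟩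

lemma Poly.pderiv_mul_pderiv {u : Seq d} {T : Finset (Idx d)} (hT : ∀ J, u J ≠ 0 → J ∈ T)
    (K L : Idx d) :
    P₁.pderiv K u * P₂.pderiv L u = ((m₁ + 1 : ℕ) : ℂ) * ((m₂ + 1 : ℕ) : ℂ) *
      ∑ p ∈ Fintype.piFinset (fun _ : Fin m₁ => T) ×ˢ Fintype.piFinset (fun _ : Fin m₂ => T),
        P₁.coeff (Fin.cons K p.1) * P₂.coeff (Fin.cons L p.2)
          * ((∏ i, u (p.1 i)) * ∏ i, u (p.2 i)) := by
  rw [P₁.pderiv_eq_sum K hT, P₂.pderiv_eq_sum L hT, Finset.sum_product, mul_mul_mul_comm,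
    Finset.sum_mul_sum]
  congr 1
  exact Finset.sum_congr rfl fun A _ => Finset.sum_congr rfl fun B _ => by ring

lemma Poly.eval_bracket {u : Seq d} (hu : (Function.support u).Finite) :
    (P₁.bracket P₂).eval u = bracketEval P₁ P₂ u := by
  have hT : ∀ J, u J ≠ 0 → J ∈ hu.toFinset := fun J h => hu.mem_toFinset.2 h
  set S := Fintype.piFinset (fun _ : Fin m₁ => hu.toFinset)
    ×ˢ Fintype.piFinset (fun _ : Fin m₂ => hu.toFinset)
  have hfst := hasSum_sum_of_ne_zero_imp_eq S
    (fun j p => P₁.coeff (Fin.cons (j, false) p.1) * P₂.coeff (Fin.cons (j, true) p.2)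
      * ((∏ i, u (p.1 i)) * ∏ i, u (p.2 i))) (fun p => momentum p.1)
    fun _ _ h => P₁.eq_momentum_of_coeff_cons_false_ne_zero
      (left_ne_zero_of_mul (left_ne_zero_of_mul h))
  have hsnd := hasSum_sum_of_ne_zero_imp_eq S
    (fun j p => P₁.coeff (Fin.cons (j, true) p.1) * P₂.coeff (Fin.cons (j, false) p.2)
      * ((∏ i, u (p.1 i)) * ∏ i, u (p.2 i))) (fun p => -momentum p.1)
    fun _ _ h => P₁.eq_neg_momentum_of_coeff_cons_true_ne_zero
      (left_ne_zero_of_mul (left_ne_zero_of_mul h))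
  rw [Poly.bracket, Poly.eval_symmetrization hT, sum_piFinset_add_eq_sum_product, bracketEval]
  simp_rw [P₁.pderiv_mul_pderiv P₂ hT, ← mul_sub]
  rw [((hfst.sub hsnd).mul_left _).tsum_eq, ← Finset.sum_sub_distrib, Finset.mul_sum,
    Finset.mul_sum]
  refine Finset.sum_congr rfl fun p _ => ?_
  simp only [Fin.append_left, Fin.append_right, Fin.prod_univ_add, bracketCoeff]
  ring

lemma Poly.norm_bracket_le {R : ℝ} (hR : 0 < R) :
    (P₁.bracket P₂).norm R
      ≤ 2 * ((m₁ + 1 : ℕ) : ℝ) * ((m₂ + 1 : ℕ) : ℝ) / R ^ 2 * P₁.norm R * P₂.norm R := by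
  have hcoeff : ∀ Jv, ‖(P₁.bracket P₂).coeff Jv‖ ≤ 2 * ((m₁ + 1 : ℕ) : ℝ)
      * ((m₂ + 1 : ℕ) : ℝ) * (P₁.norm R / R ^ (m₁ + 1)) * (P₂.norm R / R ^ (m₂ + 1)) :=
    norm_symmetrize_le _ fun _ => norm_bracketCoeff_le P₁ P₂
      (P₁.norm_coeff_le_norm_div hR) (P₂.norm_coeff_le_norm_div hR) _ _
  refine ((P₁.bracket P₂).norm_le_of_norm_coeff_le hcoeff hR.le).trans_eq ?_
  field_simp
  ring

end Bracket

theorem stmt_3_general (d : ℕ) (r₁ r₂ : ℕ) (h₁ : 1 ≤ r₁) (h₂ : 1 ≤ r₂)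
    (P₁ : Poly d r₁) (P₂ : Poly d r₂) :
    ∃ Q : Poly d (r₁ + r₂ - 2),
      (∀ u : Seq d, (Function.support u).Finite → Q.eval u = bracketEval P₁ P₂ u) ∧
      ∀ R : ℝ, 0 < R →
        Q.norm R ≤ 2 * r₁ * r₂ / R ^ 2 * P₁.norm R * P₂.norm R := by
  obtain ⟨m₁, rfl⟩ : ∃ m, r₁ = m + 1 := ⟨r₁ - 1, by omega⟩
  obtain ⟨m₂, rfl⟩ : ∃ m, r₂ = m + 1 := ⟨r₂ - 1, by omega⟩
  rw [show m₁ + 1 + (m₂ + 1) - 2 = m₁ + m₂ by omega]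
  exact ⟨P₁.bracket P₂, fun u hu => P₁.eval_bracket P₂ hu, fun R hR => P₁.norm_bracket_le P₂ hR⟩

/-- Lemma "Poisson brackets".
Given `P₁ ∈ 𝒫_{r₁}`, `P₂ ∈ 𝒫_{r₂}`, the Poisson bracket `{P₁;P₂}` is a well defined
element of `𝒫_{r₁+r₂−2}` (i.e. there is `Q ∈ 𝒫_{r₁+r₂−2}` representing it), and for every
`R > 0`, `‖{P₁;P₂}‖_R ≤ (2 r₁ r₂ / R²) ‖P₁‖_R ‖P₂‖_R`. -/
theorem stmt_3 (d : ℕ) (hd : 1 ≤ d) (r₁ r₂ : ℕ) (h₁ : 1 ≤ r₁) (h₂ : 1 ≤ r₂)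
    (P₁ : Poly d r₁) (P₂ : Poly d r₂) :
    ∃ Q : Poly d (r₁ + r₂ - 2),
      (∀ u : Seq d, (Function.support u).Finite → Q.eval u = bracketEval P₁ P₂ u) ∧
      ∀ R : ℝ, 0 < R →
        Q.norm R ≤ 2 * r₁ * r₂ / R ^ 2 * P₁.norm R * P₂.norm R :=
  stmt_3_general d r₁ r₂ h₁ h₂ P₁ P₂

end AG
end
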